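/- There exists a family U = ∏_p U_p of subsets U_p ⊆ Z_p with μ(U_p) = 0 for every prime p which is not admissible: taking U_{p_n} = {n} where p_n is the n-th prime, the tail density ρ_M(U) equals 1/2 for every M, so does not tend to 0. -/

import Mathlib

open Filter MeasureTheory

/-- The tail set `Z_M` for the family `U_{p_n} = {n}` (where `p_n` is the `n`-th prime):
integers `a = n ≥ 1` such that the `n`-th prime exceeds `M`. -/
def tailSetSingleton (M : ℕ) : Set ℤ :=
  {a : ℤ | ∃ n : ℕ, 1 ≤ n ∧ a = (n : ℤ) ∧ M < Nat.nth Nat.Prime (n - 1)}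

/-- The tail (upper) density `ρ_M` of the family `U_{p_n} = {n}`. -/
noncomputable def tailDensitySingleton (M : ℕ) : ℝ :=
  limsup (fun X : ℝ =>
    (Nat.card {a : ℤ // a ∈ tailSetSingleton M ∧ |(a : ℝ)| ≤ X} : ℝ) / (2 * X)) atTop

lemma exists_nth_prime_gt (M : ℕ) : ∃ k, M < Nat.nth Nat.Prime k := by
  obtain ⟨p, hpM, hp⟩ := Nat.exists_infinite_primes (M + 1)
  exact ⟨Nat.count Nat.Prime p, by rw [Nat.nth_count hp]; omega⟩

lemma tailSet_eq (M : ℕ) :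
    tailSetSingleton M = {a : ℤ | (Nat.find (exists_nth_prime_gt M) : ℤ) + 1 ≤ a} := by
  set K := Nat.find (exists_nth_prime_gt M) with hK
  ext a
  constructor
  · rintro ⟨n, hn1, rfl, hn⟩
    have : K ≤ n - 1 := Nat.find_le hn
    simp only [Set.mem_setOf_eq]
    omega
  · intro ha
    simp only [Set.mem_setOf_eq] at ha
    refine ⟨a.toNat, by omega, by omega, ?_⟩
    have h1 : K ≤ a.toNat - 1 := by omega
    have h2 : Nat.nth Nat.Prime K ≤ Nat.nth Nat.Prime (a.toNat - 1) :=
      (Nat.nth_le_nth Nat.infinite_setOf_prime).2 h1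
    exact lt_of_lt_of_le (Nat.find_spec (exists_nth_prime_gt M)) h2

lemma count_eq (M : ℕ) {X : ℝ} (_hX : 0 ≤ X) :
    (Nat.card {a : ℤ // a ∈ tailSetSingleton M ∧ |(a : ℝ)| ≤ X} : ℝ)
      = ((⌊X⌋ + 1 - ((Nat.find (exists_nth_prime_gt M) : ℤ) + 1)).toNat : ℝ) := by
  set N : ℤ := (Nat.find (exists_nth_prime_gt M) : ℤ) + 1 with hN
  have hset : {a : ℤ | a ∈ tailSetSingleton M ∧ |(a : ℝ)| ≤ X} = Set.Icc N ⌊X⌋ := by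
    ext a
    simp only [tailSet_eq, Set.mem_setOf_eq, Set.mem_Icc, ← hN]
    constructor
    · rintro ⟨h1, h2⟩
      refine ⟨h1, Int.le_floor.2 ?_⟩
      calc (a:ℝ) ≤ |(a:ℝ)| := le_abs_self _
        _ ≤ X := h2
    · rintro ⟨h1, h2⟩
      have hpos : (0:ℤ) < a := by
        have : (0:ℤ) ≤ (Nat.find (exists_nth_prime_gt M) : ℤ) := Int.natCast_nonneg _
        omega
      refine ⟨h1, ?_⟩
      rw [abs_of_pos (by exact_mod_cast hpos)]
      exact_mod_cast Int.le_floor.1 h2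
  have : {a : ℤ // a ∈ tailSetSingleton M ∧ |(a : ℝ)| ≤ X} = ↥(Set.Icc N ⌊X⌋) := by
    rw [← hset]; rfl
  rw [show {a : ℤ // a ∈ tailSetSingleton M ∧ |(a : ℝ)| ≤ X} = ↥(Set.Icc N ⌊X⌋) from this]
  rw [Nat.card_eq_fintype_card, Fintype.card_Icc, Int.card_Icc]

lemma density_tendsto (M : ℕ) :
    Tendsto (fun X : ℝ =>
      (Nat.card {a : ℤ // a ∈ tailSetSingleton M ∧ |(a : ℝ)| ≤ X} : ℝ) / (2 * X))
      atTop (nhds (1 / 2)) := by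
  set K : ℕ := Nat.find (exists_nth_prime_gt M) with hK
  have h1 : Tendsto (fun X : ℝ => ((⌊X⌋₊ : ℝ) - K) / (2 * X)) atTop (nhds (1 / 2)) := by
    have hA : Tendsto (fun X : ℝ => (⌊X⌋₊ : ℝ) / X / 2) atTop (nhds (1 / 2)) := by
      simpa using tendsto_nat_floor_div_atTop.div_const (2:ℝ)
    have hB : Tendsto (fun X : ℝ => (K : ℝ) / X / 2) atTop (nhds 0) := by
      simpa using (tendsto_const_nhds.div_atTop (tendsto_id)).div_const (2:ℝ)
    have := hA.sub hB
    rw [sub_zero] at this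
    refine this.congr' ?_
    filter_upwards [eventually_gt_atTop (0:ℝ)] with X hX
    rw [sub_div]
    congr 1 <;> rw [div_div, mul_comm]
  refine h1.congr' ?_
  filter_upwards [eventually_ge_atTop ((K : ℝ) + 1)] with X hX
  have hK0 : (0:ℝ) ≤ (K:ℝ) := by positivity
  have hX0 : (0:ℝ) ≤ X := by linarith
  rw [count_eq M hX0]
  congr 1
  have hfl : (K : ℤ) + 1 ≤ ⌊X⌋ := Int.le_floor.2 (by push_cast; linarith)
  have h2 : ((⌊X⌋ + 1 - ((K : ℤ) + 1)).toNat : ℤ) = ⌊X⌋ - K := by omega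
  have h3 : (⌊X⌋ : ℝ) = (⌊X⌋₊ : ℝ) := by
    rw [← Int.floor_toNat]; exact_mod_cast (Int.toNat_of_nonneg (Int.floor_nonneg.2 hX0)).symm
  have h4 : ((⌊X⌋ + 1 - ((K:ℤ) + 1)).toNat : ℝ) = (⌊X⌋ : ℝ) - K := by exact_mod_cast h2
  rw [h4, h3]

lemma density_eq (M : ℕ) : tailDensitySingleton M = 1 / 2 :=
  (density_tendsto M).limsup_eq

lemma haar_singleton_zero (p : ℕ) [Fact p.Prime] (m : MeasurableSpace ℤ_[p]) (b : BorelSpace ℤ_[p])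
    (μ : Measure ℤ_[p]) (hμ : μ.IsAddHaarMeasure) (huniv : μ Set.univ = 1) (x : ℤ_[p]) :
    μ {x} = 0 := by
  haveI := hμ
  haveI : MeasurableAdd ℤ_[p] :=
    ⟨fun c => (continuous_add_left c).measurable, fun c => (continuous_add_right c).measurable⟩
  have hinv : ∀ y : ℤ_[p], μ {y} = μ {0} := by
    intro y
    have h := measure_preimage_add μ (-y) {0}
    have hpre : (fun h : ℤ_[p] => -y + h) ⁻¹' {0} = {y} := by
      ext z; simp [neg_add_eq_zero, eq_comm]
    rwa [hpre] at h
  rw [hinv x]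
  by_contra h0
  have hd : Pairwise (Function.onFun Disjoint fun n : ℕ => ({(n : ℤ_[p])} : Set ℤ_[p])) := by
    intro i j hij
    simpa [Function.onFun] using (Nat.cast_injective (R := ℤ_[p])).ne hij
  have hμU := measure_iUnion (μ := μ) hd fun n => measurableSet_singleton _
  have htop : μ (⋃ n : ℕ, ({(n : ℤ_[p])} : Set ℤ_[p])) = ⊤ := by
    rw [hμU]
    exact (tsum_congr fun n : ℕ => hinv (n : ℤ_[p])).trans
      (ENNReal.tsum_const_eq_top_of_ne_zero h0)
  have hle : μ (⋃ n : ℕ, ({(n : ℤ_[p])} : Set ℤ_[p])) ≤ 1 := huniv ▸ measure_mono (Set.subset_univ _)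
  rw [htop] at hle
  exact (by simp : ¬ (⊤ : ENNReal) ≤ 1) hle

/-- There is a family `U = ∏_p U_p` with `μ(U_p) = 0` for every prime `p` which is not
admissible: taking `U_{p_n} = {n}`, each `U_p` is a singleton so has Haar measure zero, yet the
tail density `ρ_M` equals `1/2` for every `M`, so does not tend to `0`. -/
theorem singleton_family_not_admissible :
    (∀ (p : ℕ) [Fact p.Prime] (_ : MeasurableSpace ℤ_[p]) (_ : BorelSpace ℤ_[p])
      (μ : Measure ℤ_[p]), μ.IsAddHaarMeasure → μ Set.univ = 1 →
        ∀ x : ℤ_[p], μ {x} = 0) ∧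
    (∀ M : ℕ, tailDensitySingleton M = 1 / 2) ∧
    ¬ Tendsto tailDensitySingleton atTop (nhds 0) := by
  refine ⟨fun p _ m b μ hμ huniv x => haar_singleton_zero p m b μ hμ huniv x, density_eq, ?_⟩
  intro h
  have h2 : Tendsto (fun _ : ℕ => (1:ℝ)/2) atTop (nhds 0) := h.congr density_eq
  have := tendsto_nhds_unique h2 tendsto_const_nhds
  norm_num at this
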